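/- arXiv:0907.5287 — 2 statements merged into one kernel-verified Lean document; each statement's English description precedes it below -/
import Mathlib

section
/- Let φ: Z_{2k} → Z_2^k be a Gray map such that the operation φ(i)·φ(j) = φ(i+j) is Hamming-compatible. Then φ is unique up to coordinate permutation: there exists a permutation μ of the k coordinates such that μ ∘ φ equals the standard map φ_0(i) = (0^{(k−i)} | 1^{(i)}) for 0 ≤ i ≤ k−1, φ_0(i+k) = φ_0(i) + 1^{(k)}. -/
/-- The standard Gray map `ZMod (2*k) → ZMod 2 ^ k`:
`φ(i) = 0^(k-i) | 1^(i)` for `0 ≤ i ≤ k-1`, and `φ(i+k) = φ(i) + 1^(k)`. -/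
def gray (k : ℕ) (i : ZMod (2 * k)) : Fin k → ZMod 2 :=
  fun j => if i.val < k then (if k ≤ j.val + i.val then 1 else 0)
           else (if k ≤ j.val + (i.val - k) then 0 else 1)

/-! Write `φ (i + 1) = φ i + e (c i)`. Hamming compatibility says that the weight of a window
`e (c a) + ⋯ + e (c (a + n - 1))` does not depend on `a`. The windows at `a` and `a + 1` differ
by `e (c a) + e (c (a + n))`, so when `c a ≠ c (a + n)` these two coordinates occur in the window
with different parities. If `m` is the least distance between two equal flips, this parity
constraint propagates a repeat `c (b + m) = c b` to `c (b + 1 + m) = c (b + 1)`, so `c` is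
`m`-periodic and injective on `m` consecutive steps. Hence `m ≤ k`, while `φ (2m) = φ 0` gives
`2k ∣ 2m`; so `m = k`, and relabelling coordinate `c s` as `k - 1 - s` turns `φ` into the
standard map, which flips coordinate `k - 1 - (n mod k)` at step `n`. -/

open Finset

section HammingZMod2

variable {ι : Type*} [Fintype ι] [DecidableEq ι]

theorem ZMod.eq_add_one_of_ne {a b : ZMod 2} (h : a ≠ b) : b = a + 1 := by
  revert a b; decide

theorem exists_eq_add_single_of_hammingDist_eq_one {x y : ι → ZMod 2}
    (h : hammingDist x y = 1) : ∃ u, y = x + Pi.single u 1 := by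
  obtain ⟨u, hu⟩ := card_eq_one.mp h
  have hne : ∀ j, x j ≠ y j ↔ j = u := fun j => by
    simpa using congrArg (j ∈ ·) hu
  refine ⟨u, funext fun j => ?_⟩
  by_cases hj : j = u
  · subst hj
    simpa using ZMod.eq_add_one_of_ne ((hne j).mpr rfl)
  · simpa [hj] using (not_not.mp (mt (hne j).mp hj)).symm

theorem hammingNorm_add_single_of_apply_eq_zero {x : ι → ZMod 2} {u : ι} (hu : x u = 0) :
    hammingNorm (x + Pi.single u 1) = hammingNorm x + 1 := by
  have hsupp : univ.filter (fun j => (x + Pi.single u 1 : ι → ZMod 2) j ≠ 0) =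
      insert u (univ.filter (fun j => x j ≠ 0)) := by
    ext j
    by_cases hj : j = u
    · subst hj; simp [hu]
    · simp [hj]
  rw [hammingNorm, hammingNorm, hsupp, card_insert_of_notMem (by simp [hu])]

theorem apply_ne_of_hammingNorm_add_single_add_single_eq {x : ι → ZMod 2} {u v : ι}
    (huv : u ≠ v) (h : hammingNorm (x + Pi.single u 1 + Pi.single v 1) = hammingNorm x) :
    x u ≠ x v := by
  have two_more : ∀ y : ι → ZMod 2, y u = 0 → y v = 0 →
      hammingNorm (y + Pi.single u 1 + Pi.single v 1) = hammingNorm y + 2 := by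
    intro y hyu hyv
    rw [hammingNorm_add_single_of_apply_eq_zero (by simp [hyv, huv.symm]),
      hammingNorm_add_single_of_apply_eq_zero hyu]
  intro hxuv
  rcases (by decide : ∀ a : ZMod 2, a = 0 ∨ a = 1) (x u) with h0 | h1
  · have := two_more x h0 (hxuv ▸ h0)
    omega
  · set y := x + Pi.single u 1 + Pi.single v 1
    have hxy : y + Pi.single u 1 + Pi.single v 1 = x := by
      simp only [y, add_right_comm _ (Pi.single v _), add_assoc, ZModModule.add_self, add_zero]
    have := two_more y (by simp [y, huv, h1, ZModModule.add_self])
      (by simp [y, huv.symm, ← hxuv, h1, ZModModule.add_self])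
    rw [hxy] at this
    omega

end HammingZMod2

section FlipSum

variable {N : ℕ} {ι : Type*} [DecidableEq ι] (c : ZMod N → ι)

def flipSum (a : ZMod N) (n : ℕ) : ι → ZMod 2 :=
  ∑ t ∈ range n, Pi.single (c (a + t)) 1

theorem flipSum_succ (a : ZMod N) (n : ℕ) :
    flipSum c a (n + 1) = flipSum c a n + Pi.single (c (a + n)) 1 :=
  sum_range_succ _ n

theorem flipSum_succ' (a : ZMod N) (n : ℕ) :
    flipSum c a (n + 1) = Pi.single (c a) 1 + flipSum c (a + 1) n := by
  simp only [flipSum, sum_range_succ', Nat.cast_succ, Nat.cast_zero, add_zero, add_comm,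
    add_left_comm _ a]

theorem flipSum_add (a : ZMod N) (n n' : ℕ) :
    flipSum c a (n + n') = flipSum c a n + flipSum c (a + n) n' := by
  simp only [flipSum, sum_range_add, Nat.cast_add, add_assoc]

theorem flipSum_apply (a : ZMod N) (n : ℕ) (j : ι) :
    flipSum c a n j = ∑ t ∈ range n, if c (a + t) = j then 1 else 0 := by
  simp [flipSum, Finset.sum_apply, Pi.single_apply, eq_comm]

theorem flipSum_two_mul_eq_zero {m : ℕ} (hc : Function.Periodic c (m : ZMod N)) (a : ZMod N) :
    flipSum c a (2 * m) = 0 := by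
  have : flipSum c (a + m) m = flipSum c a m := by
    refine sum_congr rfl fun t _ => ?_
    rw [add_right_comm, hc]
  rw [two_mul, flipSum_add, this, ZModModule.add_self]

theorem eq_add_flipSum {φ : ZMod N → ι → ZMod 2}
    (hφ : ∀ i, φ (i + 1) = φ i + Pi.single (c i) 1) (a : ZMod N) (n : ℕ) :
    φ (a + n) = φ a + flipSum c a n := by
  induction n with
  | zero => simp [flipSum]
  | succ n ih => rw [flipSum_succ, ← add_assoc, ← ih, Nat.cast_succ, ← add_assoc, hφ]

end FlipSum

theorem injective_of_forall_add_ne {N : ℕ} {ι : Type*} {c : ZMod N → ι} {m : ℕ}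
    (hmin : ∀ a (s : ℕ), 0 < s → s < m → c (a + s) ≠ c a) :
    Function.Injective (fun s : Fin m => c (s : ℕ)) := by
  have hlt : ∀ s t : Fin m, s < t → c (s : ℕ) ≠ c (t : ℕ) := fun s t hst h =>
    hmin ((s : ℕ) : ZMod N) (t - s) (by omega) (by omega)
      (by rw [← Nat.cast_add, Nat.add_sub_cancel' hst.le]; exact h.symm)
  intro s t h
  by_contra hst
  rcases lt_or_gt_of_ne hst with hst | hst
  · exact hlt s t hst h
  · exact hlt t s hst h.symm

section Periodicity

variable {N : ℕ} {ι : Type*} [DecidableEq ι] [Fintype ι] {c : ZMod N → ι}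

theorem flipSum_apply_ne
    (hc : ∀ a n, hammingNorm (flipSum c (a + 1) n) = hammingNorm (flipSum c a n))
    {a : ZMod N} {n : ℕ} (h : c a ≠ c (a + n)) :
    flipSum c a n (c a) ≠ flipSum c a n (c (a + n)) := by
  refine apply_ne_of_hammingNorm_add_single_add_single_eq h ?_
  have hsucc := (flipSum_succ' c a n).symm.trans (flipSum_succ c a n)
  have : flipSum c a n + Pi.single (c a) 1 + Pi.single (c (a + n)) 1 = flipSum c (a + 1) n :=
    calc _ = Pi.single (c a) 1 + (flipSum c a n + Pi.single (c (a + n)) 1) := by abel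
      _ = flipSum c (a + 1) n := by rw [← hsucc, ← add_assoc, ZModModule.add_self, zero_add]
  rw [this, hc]

theorem periodic_step_of_minimal
    (hc : ∀ a n, hammingNorm (flipSum c (a + 1) n) = hammingNorm (flipSum c a n))
    {m : ℕ} (hmin : ∀ a (s : ℕ), 0 < s → s < m → c (a + s) ≠ c a)
    {b : ZMod N} (hb : c (b + m) = c b) : c (b + 1 + m) = c (b + 1) := by
  by_contra hne
  have hm : 0 < m := Nat.pos_of_ne_zero fun h => hne (by simp_all)
  rw [show b + 1 + (m : ZMod N) = b + ((m + 1 : ℕ) : ZMod N) by push_cast; ring] at hne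
  have hv : c b ≠ c (b + ((m + 1 : ℕ) : ZMod N)) := by
    intro h
    rcases (show m = 1 ∨ 1 < m by omega) with rfl | hm1
    · exact hne (h.symm.trans (by simpa using hb.symm))
    · exact hmin (b + m) 1 one_pos hm1 (by rw [add_assoc, ← Nat.cast_add, ← h, hb])
  -- In the window `[b, b + m]`, `c b` occurs exactly twice and `c (b + 1 + m)` not at all.
  apply flipSum_apply_ne hc hv
  rw [flipSum_apply, flipSum_apply]
  have hu : (∑ t ∈ range (m + 1), if c (b + t) = c b then 1 else 0 : ZMod 2) = 1 + 1 := by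
    refine (sum_eq_add_of_mem 0 m (by simp) (by simp) hm.ne fun t ht ⟨ht0, htm⟩ => ?_).trans ?_
    · rw [if_neg (hmin b t (by omega) (by simp at ht; omega))]
    · simp [hb]
  have hv' : (∑ t ∈ range (m + 1),
      if c (b + t) = c (b + ((m + 1 : ℕ) : ZMod N)) then 1 else 0 : ZMod 2) = 0 := by
    refine sum_eq_zero fun t ht => if_neg fun h => ?_
    simp only [mem_range] at ht
    rcases (show t = 0 ∨ t = 1 ∨ t = m ∨ 1 < t ∧ t < m by omega)
      with rfl | rfl | rfl | ⟨ht1, htm⟩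
    · exact hv (by simpa using h)
    · exact hne (by simpa using h.symm)
    · exact hv (hb ▸ h)
    · exact hmin (b + t) (m + 1 - t) (by omega) (by omega)
        (by rw [add_assoc, ← Nat.cast_add, Nat.add_sub_cancel' ht.le, h])
  rw [hu, hv']
  rfl

theorem periodic_of_minimal [NeZero N]
    (hc : ∀ a n, hammingNorm (flipSum c (a + 1) n) = hammingNorm (flipSum c a n))
    {m : ℕ} (hmin : ∀ a (s : ℕ), 0 < s → s < m → c (a + s) ≠ c a)
    {a₀ : ZMod N} (ha₀ : c (a₀ + m) = c a₀) : Function.Periodic c (m : ZMod N) := by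
  have from_a₀ : ∀ s : ℕ, c (a₀ + s + m) = c (a₀ + s) := by
    intro s
    induction s with
    | zero => simpa using ha₀
    | succ s ih =>
      rw [Nat.cast_succ, ← add_assoc]
      exact periodic_step_of_minimal hc hmin ih
  intro a
  simpa using from_a₀ (a - a₀).val

theorem exists_minimal_period [NeZero N]
    (hc : ∀ a n, hammingNorm (flipSum c (a + 1) n) = hammingNorm (flipSum c a n)) :
    ∃ m : ℕ, 0 < m ∧ Function.Periodic c (m : ZMod N) ∧
      ∀ a (s : ℕ), 0 < s → s < m → c (a + s) ≠ c a := by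
  classical
  have hex : ∃ m : ℕ, 0 < m ∧ ∃ a, c (a + m) = c a := ⟨N, NeZero.pos N, 0, by simp⟩
  obtain ⟨hm, a₀, ha₀⟩ := Nat.find_spec hex
  have hmin : ∀ a (s : ℕ), 0 < s → s < Nat.find hex → c (a + s) ≠ c a :=
    fun a s hs hlt h => Nat.find_min hex hlt ⟨hs, a, h⟩
  exact ⟨_, hm, periodic_of_minimal hc hmin ha₀, hmin⟩

end Periodicity

theorem gray_zero (k : ℕ) : gray k 0 = 0 := by
  funext j
  simp [gray, j.pos, not_le.mpr j.is_lt]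

theorem gray_natCast_add_one {k n : ℕ} (hn : n + 1 < 2 * k) :
    gray k ((n : ZMod (2 * k)) + 1) =
      gray k n + Pi.single (Fin.rev ⟨n % k, Nat.mod_lt n (by omega)⟩) 1 := by
  funext j
  rw [← Nat.cast_succ]
  simp only [gray, ZMod.val_natCast, Nat.mod_eq_of_lt hn, Nat.mod_eq_of_lt (Nat.lt_of_succ_lt hn),
    Pi.add_apply, Pi.single_apply, Fin.ext_iff, Fin.val_rev]
  rcases lt_or_ge n k with h | h
  · rw [Nat.mod_eq_of_lt h]
    split_ifs <;> first | rfl | omega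
  · rw [Nat.mod_eq_sub_mod h, Nat.mod_eq_of_lt (by omega)]
    split_ifs <;> first | rfl | omega

theorem eq_gray_of_flips {k : ℕ} (hk : 0 < k) {ψ : ZMod (2 * k) → Fin k → ZMod 2}
    (h0 : ψ 0 = 0)
    (hψ : ∀ n : ℕ, ψ (n + 1) = ψ n + Pi.single (Fin.rev ⟨n % k, Nat.mod_lt n hk⟩) 1) :
    ψ = gray k := by
  have : NeZero (2 * k) := ⟨by omega⟩
  suffices h : ∀ n < 2 * k, ψ n = gray k n from funext fun i => by
    simpa using h i.val (ZMod.val_lt i)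
  intro n hn
  induction n with
  | zero => simp [h0, gray_zero]
  | succ n ih => rw [Nat.cast_succ, hψ, ih (by omega), gray_natCast_add_one hn]

theorem gray_unique_up_to_permutation (k : ℕ) (hk : 0 < k)
    (φ : ZMod (2 * k) → Fin k → ZMod 2)
    (hinj : Function.Injective φ)
    (hgray : ∀ i : ZMod (2 * k), hammingDist (φ i) (φ (i + 1)) = 1)
    (hHC : ∀ a b : ZMod (2 * k), hammingDist (φ a) (φ (a + b)) = hammingNorm (φ b)) :
    ∃ μ : Equiv.Perm (Fin k),
      ∀ i : ZMod (2 * k), (fun t => φ i (μ.symm t)) = gray k i := by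
  have : NeZero (2 * k) := ⟨by omega⟩
  have hφ0 : φ 0 = 0 := hammingNorm_eq_zero.mp (by simpa using (hHC 0 0).symm)
  choose c hc using fun i => exists_eq_add_single_of_hammingDist_eq_one (hgray i)
  have hφc := eq_add_flipSum c hc
  have hweight : ∀ a n, hammingNorm (flipSum c a n) = hammingNorm (φ n) := fun a n => by
    rw [← hHC a n, hφc, hammingDist_eq_hammingNorm, neg_add_cancel_left]
  obtain ⟨m, hm, hper, hmin⟩ :=
    exists_minimal_period (c := c) fun a n => by rw [hweight, hweight]
  have hinjm := injective_of_forall_add_ne hmin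
  obtain rfl : k = m := by
    refine le_antisymm ?_ (by simpa using Fintype.card_le_of_injective _ hinjm)
    have h2m : φ ((2 * m : ℕ) : ZMod (2 * k)) = φ 0 := by
      rw [← zero_add ((2 * m : ℕ) : ZMod (2 * k)), hφc, flipSum_two_mul_eq_zero c hper,
        add_zero]
    have := Nat.le_of_dvd (by omega) ((ZMod.natCast_eq_zero_iff _ _).mp (hinj h2m))
    omega
  let σ : Fin k ≃ Fin k := Equiv.ofBijective _ (Finite.injective_iff_bijective.mp hinjm)
  refine ⟨(Fin.revPerm.trans σ).symm, fun i => ?_⟩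
  rw [Equiv.symm_symm]
  refine congrFun (eq_gray_of_flips hk (ψ := fun i t => φ i (Fin.revPerm.trans σ t))
    (funext fun t => by simp [hφ0]) fun n => ?_) i
  have hcn : σ ⟨n % k, Nat.mod_lt n hk⟩ = c n :=
    Function.Periodic.map_mod_nat (f := fun n : ℕ => c n) (fun n => by simpa using hper n) n
  funext t
  simp [hc, ← hcn, Pi.single_apply, σ.injective.eq_iff, Fin.rev_eq_iff]
end

section
/- Let C be an additive subgroup of Z_{2k}^n and Φ: Z_{2k}^n → Z_2^{kn} the coordinatewise extension of the standard Gray map φ. Then Φ(C) is a binary propelinear code of length kn, with the associated permutation of x = Φ(j_1, …, j_n) given by π_x = (σ_{j_1} | ⋯ | σ_{j_n}), where σ_j is the j-fold left cyclic shift on k coordinates. -/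
/-- The coordinatewise extension `Φ : ZMod (2*k)^n → ZMod 2^(kn)` of the Gray map. -/
def grayExt (k n : ℕ) (c : Fin n → ZMod (2 * k)) : Fin n × Fin k → ZMod 2 :=
  fun p => gray k (c p.1) p.2

/-- The action of the permutation `π_x = (σ_{j_1} | ⋯ | σ_{j_n})` associated to
`x = Φ(j_1, …, j_n)` on binary vectors of length `kn`. -/
def actExt (k : ℕ) (hk : 0 < k) (n : ℕ) (c : Fin n → ZMod (2 * k))
    (y : Fin n × Fin k → ZMod 2) : Fin n × Fin k → ZMod 2 :=
  fun p => y (p.1, ⟨(p.2.val + (c p.1).val) % k, Nat.mod_lt _ hk⟩)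

lemma gray_eq (k : ℕ) (hk : 0 < k) (i : ZMod (2 * k)) (j : Fin k) :
    gray k i j = if k ≤ (j.val + i.val) % (2 * k) then 1 else 0 := by
  haveI : NeZero (2 * k) := ⟨by omega⟩
  have hi : i.val < 2 * k := ZMod.val_lt i
  have hj : j.val < k := j.isLt
  unfold gray
  rcases lt_or_ge i.val k with h | h
  · rw [Nat.mod_eq_of_lt (by omega)]
    simp [h]
  · rw [if_neg (by omega)]
    rcases lt_or_ge (j.val + i.val) (2 * k) with h2 | h2
    · rw [Nat.mod_eq_of_lt h2, if_neg (show ¬ k ≤ j.val + (i.val - k) by omega),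
        if_pos (show k ≤ j.val + i.val by omega)]
    · have : (j.val + i.val) % (2 * k) = j.val + i.val - 2 * k := by
        rw [Nat.mod_eq_sub_mod h2, Nat.mod_eq_of_lt (by omega)]
      rw [this, if_pos (show k ≤ j.val + (i.val - k) by omega),
        if_neg (show ¬ k ≤ j.val + i.val - 2 * k by omega)]

lemma flipk (k : ℕ) (hk : 0 < k) (m : ℕ) :
    (if k ≤ (m + k) % (2 * k) then (1 : ZMod 2) else 0)
      = (if k ≤ m % (2 * k) then 1 else 0) + 1 := by
  have h := Nat.mod_lt m (show 0 < 2 * k by omega)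
  have hk2 : k % (2 * k) = k := Nat.mod_eq_of_lt (by omega)
  rcases lt_or_ge (m % (2 * k)) k with h1 | h1
  · have : (m + k) % (2 * k) = m % (2 * k) + k := by
      rw [Nat.add_mod, hk2, Nat.mod_eq_of_lt (by omega)]
    rw [this, if_pos (by omega), if_neg (by omega)]; decide
  · have : (m + k) % (2 * k) = m % (2 * k) - k := by
      rw [Nat.add_mod, hk2, Nat.mod_eq_sub_mod (by omega), Nat.mod_eq_of_lt (by omega)]
      omega
    rw [this, if_neg (by omega), if_pos h1]; decide

lemma gray_add (k : ℕ) (hk : 0 < k) (i i' : ZMod (2 * k)) (j : Fin k) :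
    gray k (i + i') j
      = gray k i j + gray k i' ⟨(j.val + i.val) % k, Nat.mod_lt _ hk⟩ := by
  haveI : NeZero (2 * k) := ⟨by omega⟩
  rw [gray_eq k hk, gray_eq k hk, gray_eq k hk]
  set a := i.val with ha; set b := i'.val with hb
  have hval : (i + i').val = (a + b) % (2 * k) := ZMod.val_add i i'
  rw [hval]
  simp only [Nat.add_mod_mod, Fin.val_mk]
  have hdvd : k ∣ 2 * k := ⟨2, by ring⟩
  have hmm : (j.val + a) % (2 * k) % k = (j.val + a) % k :=
    Nat.mod_mod_of_dvd _ hdvd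
  have hu := Nat.mod_lt (j.val + a) (show 0 < 2 * k by omega)
  have hX : (j.val + (a + b)) % (2 * k) = ((j.val + a) % (2 * k) + b) % (2 * k) := by
    rw [Nat.mod_add_mod, add_assoc]
  rcases lt_or_ge ((j.val + a) % (2 * k)) k with h1 | h1
  · have hZ : (j.val + a) % k = (j.val + a) % (2 * k) := by
      rw [← hmm, Nat.mod_eq_of_lt h1]
    simp only [hZ]
    rw [hX, if_neg (not_le.mpr h1), zero_add]
  · have hZ : (j.val + a) % k + k = (j.val + a) % (2 * k) := by
      rw [← hmm, Nat.mod_eq_sub_mod h1, Nat.mod_eq_of_lt (by omega)]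
      omega
    have key := flipk k hk ((j.val + a) % k + b)
    rw [show (j.val + a) % k + b + k = ((j.val + a) % k + k) + b by ring, hZ] at key
    rw [hX, if_pos h1, key, add_comm]

lemma actExt_comp' (k : ℕ) (hk : 0 < k) (n : ℕ) (c c' : Fin n → ZMod (2 * k)) :
    actExt k hk n c ∘ actExt k hk n c' = actExt k hk n (c + c') := by
  haveI : NeZero (2 * k) := ⟨by omega⟩
  funext y p
  simp only [Function.comp_apply, actExt]
  congr 1
  refine Prod.ext rfl (Fin.ext ?_)
  show ((p.2.val + (c p.1).val) % k + (c' p.1).val) % k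
      = (p.2.val + ((c + c') p.1).val) % k
  have hdvd : k ∣ 2 * k := ⟨2, by ring⟩
  set a := (c p.1).val; set b := (c' p.1).val
  have h1 : ((p.2.val + a) % k + b) % k = (p.2.val + a + b) % k := Nat.mod_add_mod _ _ _
  have h2 : (c + c') p.1 = c p.1 + c' p.1 := rfl
  have h4 : (a + b) % (2 * k) % k = (a + b) % k := Nat.mod_mod_of_dvd _ hdvd
  have h3 : (p.2.val + (a + b) % (2 * k)) % k = (p.2.val + (a + b)) % k := by
    conv_lhs => rw [Nat.add_mod]
    rw [h4, ← Nat.add_mod]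
  rw [h1, h2, ZMod.val_add, h3, ← add_assoc]

lemma actExt_zero (k : ℕ) (hk : 0 < k) (n : ℕ) :
    actExt k hk n 0 = id := by
  haveI : NeZero (2 * k) := ⟨by omega⟩
  funext y p
  simp only [actExt, id]
  congr 1
  refine Prod.ext rfl (Fin.ext ?_)
  show (p.2.val + ((0 : ZMod (2*k))).val) % k = p.2.val
  rw [ZMod.val_zero, Nat.add_zero, Nat.mod_eq_of_lt p.2.isLt]

lemma actExt_bij (k : ℕ) (hk : 0 < k) (n : ℕ) (c : Fin n → ZMod (2 * k)) :
    Function.Bijective (actExt k hk n c) := by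
  refine Function.bijective_iff_has_inverse.2 ⟨actExt k hk n (-c), ?_, ?_⟩
  · intro y
    have := congrFun (actExt_comp' k hk n (-c) c) y
    simpa [actExt_zero] using this
  · intro y
    have := congrFun (actExt_comp' k hk n c (-c)) y
    simpa [actExt_zero] using this

lemma grayExt_add (k : ℕ) (hk : 0 < k) (n : ℕ) (c c' : Fin n → ZMod (2 * k)) :
    grayExt k n c + actExt k hk n c (grayExt k n c') = grayExt k n (c + c') := by
  funext p
  show grayExt k n c p + grayExt k n c' _ = _
  simp only [grayExt, actExt]
  exact (gray_add k hk (c p.1) (c' p.1) p.2).symm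

theorem grayExt_propelinear (k n : ℕ) (hk : 0 < k)
    (C : AddSubgroup (Fin n → ZMod (2 * k))) :
    (∀ c : Fin n → ZMod (2 * k), Function.Bijective (actExt k hk n c)) ∧
    (∀ c ∈ C, ∀ c' ∈ C,
      grayExt k n c + actExt k hk n c (grayExt k n c') ∈
        grayExt k n '' (C : Set (Fin n → ZMod (2 * k)))) ∧
    (∀ c ∈ C, ∀ c' ∈ C,
      actExt k hk n c ∘ actExt k hk n c' = actExt k hk n (c + c')) ∧
    (∀ c ∈ C, ∀ c' ∈ C,
      grayExt k n c + actExt k hk n c (grayExt k n c') = grayExt k n (c + c')) := by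
  refine ⟨actExt_bij k hk n, ?_, fun c _ c' _ => actExt_comp' k hk n c c',
    fun c _ c' _ => grayExt_add k hk n c c'⟩
  intro c hc c' hc'
  exact ⟨c + c', add_mem hc hc', (grayExt_add k hk n c c').symm⟩
end
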